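/- If A is an n×n complex matrix with numerical range contained in the sector S_α for some α ∈ [0, π/2), then A is invertible and the numerical range of A⁻¹ is also contained in S_α. -/

import Mathlib

open Matrix
open scoped ComplexOrder

noncomputable section
namespace Paper

variable {n : ℕ}

/-- Real part `(A + Aᴴ)/2`. -/
def re (A : Matrix (Fin n) (Fin n) ℂ) : Matrix (Fin n) (Fin n) ℂ := (2⁻¹ : ℂ) • (A + Aᴴ)

/-- Imaginary part `(A - Aᴴ)/(2i)`. -/
def im (A : Matrix (Fin n) (Fin n) ℂ) : Matrix (Fin n) (Fin n) ℂ :=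
  (2 * Complex.I)⁻¹ • (A - Aᴴ)

/-- The sector `S_α`. -/
def sector (α : ℝ) : Set ℂ := {z | 0 < z.re ∧ |z.im| ≤ z.re * Real.tan α}

/-- Numerical range of a matrix. -/
def numericalRange (A : Matrix (Fin n) (Fin n) ℂ) : Set ℂ :=
  {z | ∃ x : Fin n → ℂ, star x ⬝ᵥ x = 1 ∧ z = star x ⬝ᵥ (A *ᵥ x)}

/-- Loewner order: `X ≤ Y` iff `Y - X` is positive semidefinite. -/
def loewnerLE (X Y : Matrix (Fin n) (Fin n) ℂ) : Prop := (Y - X).PosSemidef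

lemma re_isHermitian (A : Matrix (Fin n) (Fin n) ℂ) : (re A).IsHermitian := by
  show ((2⁻¹ : ℂ) • (A + Aᴴ))ᴴ = (2⁻¹ : ℂ) • (A + Aᴴ)
  rw [Matrix.conjTranspose_smul, Matrix.conjTranspose_add,
    Matrix.conjTranspose_conjTranspose, add_comm Aᴴ A]
  simp

/-- The `j`-th largest element of `v` (descending sort). -/
def nthLargest (v : Fin n → ℝ) (j : Fin n) : ℝ :=
  ((List.ofFn v).mergeSort (fun a b => decide (b ≤ a))).get
    (Fin.cast (by simp) j)

/-- `j`-th largest eigenvalue of a Hermitian matrix. -/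
def eigDesc {A : Matrix (Fin n) (Fin n) ℂ} (hA : A.IsHermitian) (j : Fin n) : ℝ :=
  nthLargest hA.eigenvalues j

/-- `j`-th largest singular value. -/
def singular (A : Matrix (Fin n) (Fin n) ℂ) (j : Fin n) : ℝ :=
  nthLargest (fun i => Real.sqrt ((Matrix.isHermitian_conjTranspose_mul_self A).eigenvalues i)) j

/-- The old Mathlib `Matrix.PosSemidef.sqrt` (removed), with its old definition. -/
def posSemidefSqrt {A : Matrix (Fin n) (Fin n) ℂ} (hA : A.PosSemidef) : Matrix (Fin n) (Fin n) ℂ :=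
  hA.1.eigenvectorUnitary.1 * diagonal ((↑) ∘ (fun x : ℝ => Real.sqrt x) ∘ hA.1.eigenvalues) *
    (star hA.1.eigenvectorUnitary : Matrix (Fin n) (Fin n) ℂ)

/-- Weighted geometric mean of positive definite matrices. -/
def sharp (v : ℝ) {A B : Matrix (Fin n) (Fin n) ℂ} (hA : A.PosDef) (hB : B.PosDef) :
    Matrix (Fin n) (Fin n) ℂ :=
  posSemidefSqrt hA.posSemidef *
    (Matrix.isHermitian_mul_mul_conjTranspose (posSemidefSqrt hA.posSemidef)⁻¹ hB.1).cfc
      (fun x => Real.rpow x v) * posSemidefSqrt hA.posSemidef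

/-- Weighted arithmetic mean. -/
def arith (v : ℝ) (A B : Matrix (Fin n) (Fin n) ℂ) : Matrix (Fin n) (Fin n) ℂ :=
  (1 - v) • A + v • B

/-- Weighted harmonic mean. -/
def harm (v : ℝ) (A B : Matrix (Fin n) (Fin n) ℂ) : Matrix (Fin n) (Fin n) ℂ :=
  ((1 - v) • A⁻¹ + v • B⁻¹)⁻¹

/-- Kantorovich constant. -/
def K (h : ℝ) : ℝ := (h + 1) ^ 2 / (4 * h)

lemma ofReal_mul_mem_sector_iff {α c : ℝ} (hc : 0 < c) {z : ℂ} :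
    (c : ℂ) * z ∈ sector α ↔ z ∈ sector α := by
  simp only [sector, Set.mem_ofPred_eq, Complex.re_ofReal_mul, Complex.im_ofReal_mul, abs_mul,
    abs_of_pos hc, mul_assoc, mul_pos_iff_of_pos_left hc, mul_le_mul_iff_right₀ hc]

lemma star_mem_sector_iff {α : ℝ} {z : ℂ} : star z ∈ sector α ↔ z ∈ sector α := by
  simp [sector]

lemma zero_notMem_sector (α : ℝ) : (0 : ℂ) ∉ sector α := by
  simp [sector]

/-- The numerical range only sees unit vectors; the sector, being a cone, sees all of them. -/
lemma dotProduct_mulVec_mem_sector {α : ℝ} {A : Matrix (Fin n) (Fin n) ℂ}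
    (hA : numericalRange A ⊆ sector α) {x : Fin n → ℂ} (hx : x ≠ 0) :
    star x ⬝ᵥ (A *ᵥ x) ∈ sector α := by
  have hpos : 0 < star x ⬝ᵥ x := dotProduct_star_self_pos_iff.2 hx
  set r := (star x ⬝ᵥ x).re
  have hr : 0 < r := (Complex.pos_iff.1 hpos).1
  have hxx : star x ⬝ᵥ x = r := Complex.eq_re_of_ofReal_le (r := 0) (by simp)
  set s : ℂ := (((Real.sqrt r)⁻¹ : ℝ) : ℂ)
  have hss : star s * s = (r⁻¹ : ℝ) := by
    rw [Complex.star_def, Complex.conj_ofReal, ← Complex.ofReal_mul, ← mul_inv,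
      Real.mul_self_sqrt hr.le]
  have hquad (B : Matrix (Fin n) (Fin n) ℂ) :
      star (s • x) ⬝ᵥ (B *ᵥ (s • x)) = (r⁻¹ : ℝ) * (star x ⬝ᵥ (B *ᵥ x)) := by
    rw [star_smul, mulVec_smul, smul_dotProduct, dotProduct_smul, smul_eq_mul, smul_eq_mul,
      ← mul_assoc, hss]
  have hunit : star (s • x) ⬝ᵥ (s • x) = 1 := by
    simpa only [one_mulVec, hxx, ← Complex.ofReal_mul, inv_mul_cancel₀ hr.ne',
      Complex.ofReal_one] using hquad 1
  rw [← ofReal_mul_mem_sector_iff (inv_pos.2 hr), ← hquad]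
  exact hA ⟨s • x, hunit, rfl⟩

lemma isUnit_det_of_dotProduct_mulVec_ne_zero {m K : Type*} [Fintype m] [DecidableEq m]
    [Field K] [Star K] {A : Matrix m m K} (hA : ∀ x ≠ 0, star x ⬝ᵥ (A *ᵥ x) ≠ 0) :
    IsUnit A.det := by
  rw [isUnit_iff_ne_zero, Ne, ← exists_mulVec_eq_zero_iff]
  rintro ⟨x, hx, hAx⟩
  simpa [hAx] using hA x hx

lemma star_dotProduct_inv_mulVec {m R : Type*} [Fintype m] [DecidableEq m] [CommRing R]
    [StarRing R] {A : Matrix m m R} (hA : IsUnit A.det) (x : m → R) :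
    star x ⬝ᵥ (A⁻¹ *ᵥ x) = star (star (A⁻¹ *ᵥ x) ⬝ᵥ (A *ᵥ (A⁻¹ *ᵥ x))) := by
  rw [mulVec_mulVec, mul_nonsing_inv A hA, one_mulVec, star_dotProduct]

theorem numericalRange_inv_subset_sector_general (α : ℝ)
    (A : Matrix (Fin n) (Fin n) ℂ) (hA : numericalRange A ⊆ sector α) :
    IsUnit A.det ∧ numericalRange A⁻¹ ⊆ sector α := by
  have hdet : IsUnit A.det := isUnit_det_of_dotProduct_mulVec_ne_zero fun x hx h =>
    zero_notMem_sector α (h ▸ dotProduct_mulVec_mem_sector hA hx)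
  refine ⟨hdet, ?_⟩
  rintro _ ⟨x, hx, rfl⟩
  have hy : A⁻¹ *ᵥ x ≠ 0 := fun h => by
    rw [← one_mulVec x, ← mul_nonsing_inv A hdet, ← mulVec_mulVec, h, mulVec_zero] at hx
    simp at hx
  rw [star_dotProduct_inv_mulVec hdet, star_mem_sector_iff]
  exact dotProduct_mulVec_mem_sector hA hy

/-- the inverse of a sector matrix is a sector matrix. -/
theorem numericalRange_inv_subset_sector (α : ℝ) (hα : α ∈ Set.Ico 0 (Real.pi / 2))
    (A : Matrix (Fin n) (Fin n) ℂ) (hA : numericalRange A ⊆ sector α) :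
    IsUnit A.det ∧ numericalRange A⁻¹ ⊆ sector α :=
  numericalRange_inv_subset_sector_general α A hA

end Paper
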